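/- Let X be a Noetherian topological space, let f : X → X be a continuous map, let x ∈ X, let (x₋ₙ)_{n ≥ 0} be a coherent backward orbit of x with respect to f, and let Y ⊆ X be a closed subset. Then the set S = { n ∈ ℕ : x₋ₙ ∈ Y } is a union of at most finitely many arithmetic progressions together with a set of Banach density zero. -/

import Mathlib

/-!
Noetherian induction on the closed set `tailLimit y = ⋂ N, closure {y j | j ≥ N}`, which in a
Noetherian space equals `closure {y j | j ≥ N}` for all large `N`. If it lies in `Y`, the
return set `S = {j | y j ∈ Y}` contains a tail of `ℕ`; if `S` has Banach density zero there is
nothing to prove. Otherwise take a minimal closed `C ⊆ Y` whose return set `A` has positive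
density. Such an `A` meets some translate `A - d`, `d ≥ 1`, in positive density (otherwise its
elements in a window are `B`-separated for every `B`), so minimality forces `g^[d] '' C ⊆ C`;
then `A` is closed under `m + d ↦ m`, hence contains a whole residue class `r + dℕ`. The
subsampled orbits `j ↦ y (r' + j * d)` are backward orbits of `g^[d]` whose tail limits are
cyclically mapped into each other by `g`; since `tailLimit y` lies in the closure of its image
under `g`, if one of them were all of `tailLimit y` then so would be the one of the class `r`,
which lies in `Y`. So each is strictly smaller, and the induction hypothesis applies to every
residue class.
-/

/-- The Banach (upper) density of a set of natural numbers: the `limsup`, as the interval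
length `n` tends to infinity, of the largest proportion `|S ∩ I| / |I|` over
intervals `I` of natural numbers of length `n`. -/
noncomputable def banachDensity (S : Set ℕ) : ℝ :=
  Filter.limsup (fun n : ℕ => ⨆ a : ℕ, ((S ∩ Set.Ico a (a + n)).ncard : ℝ) / n) Filter.atTop

open Filter Set Topology

-- `banachDensity S` is by definition `limsup (windowDensity S) atTop`.
noncomputable def windowDensity (S : Set ℕ) (n : ℕ) : ℝ :=
  ⨆ a : ℕ, ((S ∩ Ico a (a + n)).ncard : ℝ) / n

-- Equivalent to `banachDensity S = 0` since `windowDensity S ≥ 0`, and easier to work with.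
def HasBanachDensityZero (S : Set ℕ) : Prop :=
  Tendsto (windowDensity S) atTop (𝓝 0)

lemma ncard_inter_Ico_le (S : Set ℕ) (a n : ℕ) : (S ∩ Ico a (a + n)).ncard ≤ n :=
  (ncard_le_ncard inter_subset_right (finite_Ico _ _)).trans (by simp)

lemma bddAbove_range_windowDensity (S : Set ℕ) (n : ℕ) :
    BddAbove (range fun a => ((S ∩ Ico a (a + n)).ncard : ℝ) / n) := by
  refine ⟨1, ?_⟩
  rintro _ ⟨a, rfl⟩
  exact div_le_one_of_le₀ (mod_cast ncard_inter_Ico_le S a n) n.cast_nonneg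

lemma le_windowDensity (S : Set ℕ) (a n : ℕ) :
    ((S ∩ Ico a (a + n)).ncard : ℝ) / n ≤ windowDensity S n :=
  le_ciSup (bddAbove_range_windowDensity S n) a

lemma windowDensity_nonneg (S : Set ℕ) (n : ℕ) : 0 ≤ windowDensity S n :=
  Real.iSup_nonneg fun _ => by positivity

lemma windowDensity_le_of_forall_exists {A B : Set ℕ} {n : ℕ}
    (h : ∀ a, ∃ b, (A ∩ Ico a (a + n)).ncard ≤ (B ∩ Ico b (b + n)).ncard) :
    windowDensity A n ≤ windowDensity B n := by
  refine Real.iSup_le (fun a => ?_) (windowDensity_nonneg B n)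
  obtain ⟨b, hb⟩ := h a
  exact (div_le_div_of_nonneg_right (mod_cast hb) n.cast_nonneg).trans (le_windowDensity B b n)

lemma windowDensity_mono {A B : Set ℕ} (h : A ⊆ B) (n : ℕ) :
    windowDensity A n ≤ windowDensity B n :=
  windowDensity_le_of_forall_exists fun a =>
    ⟨a, ncard_le_ncard (inter_subset_inter_left _ h) ((finite_Ico _ _).inter_of_right _)⟩

lemma windowDensity_union_le (A B : Set ℕ) (n : ℕ) :
    windowDensity (A ∪ B) n ≤ windowDensity A n + windowDensity B n := by
  refine Real.iSup_le (fun a => ?_) <|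
    add_nonneg (windowDensity_nonneg A n) (windowDensity_nonneg B n)
  have hcard : ((A ∪ B) ∩ Ico a (a + n)).ncard ≤
      (A ∩ Ico a (a + n)).ncard + (B ∩ Ico a (a + n)).ncard := by
    rw [union_inter_distrib_right]
    exact ncard_union_le _ _
  calc (((A ∪ B) ∩ Ico a (a + n)).ncard : ℝ) / n
      ≤ ((A ∩ Ico a (a + n)).ncard + (B ∩ Ico a (a + n)).ncard : ℝ) / n :=
        div_le_div_of_nonneg_right (mod_cast hcard) n.cast_nonneg
    _ ≤ windowDensity A n + windowDensity B n := by
        rw [add_div]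
        exact add_le_add (le_windowDensity A a n) (le_windowDensity B a n)

lemma windowDensity_le_ncard_div {S : Set ℕ} (hS : S.Finite) (n : ℕ) :
    windowDensity S n ≤ S.ncard / n :=
  Real.iSup_le (fun _ => div_le_div_of_nonneg_right
    (mod_cast ncard_le_ncard inter_subset_left hS) n.cast_nonneg) (by positivity)

lemma windowDensity_preimage_add_le (B : Set ℕ) (d n : ℕ) :
    windowDensity {m | m + d ∈ B} n ≤ windowDensity B n :=
  windowDensity_le_of_forall_exists fun a => ⟨a + d,
    ncard_le_ncard_of_injOn (· + d)
      (fun m ⟨hm, hm₁, hm₂⟩ => ⟨hm, by simp only [mem_Ico] at *; omega⟩)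
      (add_left_injective d).injOn ((finite_Ico _ _).inter_of_right _)⟩

lemma windowDensity_image_le {φ : ℕ → ℕ} (hφ : StrictMono φ) (A : Set ℕ) (n : ℕ) :
    windowDensity (φ '' A) n ≤ windowDensity A n := by
  classical
  refine windowDensity_le_of_forall_exists fun a => ?_
  have hex : ∃ j, a ≤ φ j := ⟨a, hφ.id_le a⟩
  refine ⟨Nat.find hex, ?_⟩
  have hsub :
      φ '' A ∩ Ico a (a + n) ⊆ φ '' (A ∩ Ico (Nat.find hex) (Nat.find hex + n)) := by
    rintro _ ⟨⟨j, hj, rfl⟩, hja, hjn⟩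
    refine ⟨j, ⟨hj, Nat.find_min' hex hja, ?_⟩, rfl⟩
    by_contra! hle
    have := hφ.add_le_nat n (Nat.find hex)
    have := hφ.monotone (show n + Nat.find hex ≤ j by omega)
    have := Nat.find_spec hex
    omega
  exact (ncard_le_ncard hsub ((((finite_Ico _ _).inter_of_right _)).image φ)).trans
    (ncard_image_le ((finite_Ico _ _).inter_of_right _))

lemma Set.Finite.hasBanachDensityZero {S : Set ℕ} (hS : S.Finite) : HasBanachDensityZero S :=
  squeeze_zero (windowDensity_nonneg S) (windowDensity_le_ncard_div hS)
    (tendsto_const_nhds.div_atTop tendsto_natCast_atTop_atTop)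

namespace HasBanachDensityZero

lemma mono {A B : Set ℕ} (h : A ⊆ B) (hB : HasBanachDensityZero B) : HasBanachDensityZero A :=
  squeeze_zero (windowDensity_nonneg A) (windowDensity_mono h) hB

lemma union {A B : Set ℕ} (hA : HasBanachDensityZero A) (hB : HasBanachDensityZero B) :
    HasBanachDensityZero (A ∪ B) :=
  squeeze_zero (windowDensity_nonneg _) (windowDensity_union_le A B) (by simpa using hA.add hB)

lemma biUnion {ι : Type*} (F : Finset ι) {A : ι → Set ℕ}
    (h : ∀ i ∈ F, HasBanachDensityZero (A i)) : HasBanachDensityZero (⋃ i ∈ F, A i) := by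
  classical
  induction F using Finset.induction_on with
  | empty => simpa using finite_empty.hasBanachDensityZero
  | insert i F _ ih =>
    rw [Finset.set_biUnion_insert]
    exact (h i (F.mem_insert_self i)).union (ih fun j hj => h j (Finset.mem_insert_of_mem hj))

lemma preimage_add {B : Set ℕ} (hB : HasBanachDensityZero B) (d : ℕ) :
    HasBanachDensityZero {m | m + d ∈ B} :=
  squeeze_zero (windowDensity_nonneg _) (fun n => windowDensity_preimage_add_le B d n) hB

lemma image {A : Set ℕ} (hA : HasBanachDensityZero A) {φ : ℕ → ℕ} (hφ : StrictMono φ) :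
    HasBanachDensityZero (φ '' A) :=
  squeeze_zero (windowDensity_nonneg _) (windowDensity_image_le hφ A) hA

lemma banachDensity_eq_zero {S : Set ℕ} (h : HasBanachDensityZero S) : banachDensity S = 0 :=
  h.limsup_eq

end HasBanachDensityZero

lemma ncard_le_div_add_one_of_separated {U : Set ℕ} {a n B : ℕ} (hB : 0 < B)
    (hU : U ⊆ Ico a (a + n)) (hsep : ∀ m ∈ U, ∀ m' ∈ U, m < m' → m + B < m') :
    U.ncard ≤ n / B + 1 := by
  have hmono : StrictMonoOn (fun m => (m - a) / B) U := fun m hm m' hm' hlt => by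
    have hle : m - a + B ≤ m' - a := by
      have := hsep m hm m' hm' hlt; have := (hU hm).1; omega
    calc (m - a) / B < (m - a) / B + 1 := Nat.lt_succ_self _
      _ = (m - a + B) / B := (Nat.add_div_right _ hB).symm
      _ ≤ (m' - a) / B := Nat.div_le_div_right hle
  have hmaps : ∀ m ∈ U, (m - a) / B ∈ Iio (n / B + 1) := fun m hm => by
    have := (hU hm).2
    exact Nat.lt_succ_of_le (Nat.div_le_div_right (by omega))
  simpa using ncard_le_ncard_of_injOn _ hmaps hmono.injOn

lemma windowDensity_le_add_shiftInter (S : Set ℕ) {B n : ℕ} (hB : 0 < B) (hn : 0 < n) :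
    windowDensity S n ≤
      windowDensity (⋃ d ∈ Finset.Icc 1 B, {m | m ∈ S ∧ m + d ∈ S}) n + 1 / B + 1 / n := by
  set T := ⋃ d ∈ Finset.Icc 1 B, {m | m ∈ S ∧ m + d ∈ S}
  refine Real.iSup_le (fun a => ?_) (by have := windowDensity_nonneg T n; positivity)
  set W := Ico a (a + n)
  have hsep : ∀ m ∈ (S ∩ W) \ T, ∀ m' ∈ (S ∩ W) \ T, m < m' → m + B < m' := by
    rintro m ⟨⟨hmS, -⟩, hmT⟩ m' ⟨⟨hm'S, -⟩, -⟩ hlt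
    by_contra! hle
    refine hmT (mem_biUnion (x := m' - m) (Finset.mem_Icc.2 ⟨?_, ?_⟩) ⟨hmS, ?_⟩ : m ∈ T)
    exacts [Nat.sub_pos_of_lt hlt, by omega, by rwa [Nat.add_sub_cancel' hlt.le]]
  have hU : ((S ∩ W) \ T).ncard ≤ n / B + 1 :=
    ncard_le_div_add_one_of_separated hB (sdiff_subset.trans inter_subset_right) hsep
  have hsplit : (S ∩ W).ncard ≤ (T ∩ W).ncard + ((S ∩ W) \ T).ncard := by
    refine (ncard_le_ncard (fun m hm => ?_) ?_).trans (ncard_union_le _ _)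
    · by_cases hmT : m ∈ T
      exacts [Or.inl ⟨hmT, hm.2⟩, Or.inr ⟨hm, hmT⟩]
    · exact ((finite_Ico _ _).inter_of_right _).union
        (((finite_Ico _ _).inter_of_right _).sdiff)
  have hcard : ((S ∩ W).ncard : ℝ) ≤ (T ∩ W).ncard + ((n : ℝ) / B + 1) := by
    have : (((n / B : ℕ)) : ℝ) ≤ n / B := Nat.cast_div_le
    have : ((S ∩ W).ncard : ℝ) ≤ (T ∩ W).ncard + ((n / B : ℕ) + 1 : ℕ) := by
      exact_mod_cast hsplit.trans (by omega)
    push_cast at this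
    linarith
  calc ((S ∩ W).ncard : ℝ) / n ≤ ((T ∩ W).ncard + ((n : ℝ) / B + 1)) / n :=
        div_le_div_of_nonneg_right hcard n.cast_nonneg
    _ = (T ∩ W).ncard / n + 1 / B + 1 / n := by field_simp; ring
    _ ≤ windowDensity T n + 1 / B + 1 / n := by gcongr; exact le_windowDensity T a n

lemma HasBanachDensityZero.of_forall_inter_shift {S : Set ℕ}
    (h : ∀ d, 0 < d → HasBanachDensityZero {m | m ∈ S ∧ m + d ∈ S}) :
    HasBanachDensityZero S := by
  refine tendsto_order.2 ⟨fun c hc => .of_forall fun n => hc.trans_le (windowDensity_nonneg S n),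
    fun ε hε => ?_⟩
  obtain ⟨B, hB⟩ := exists_nat_one_div_lt (by positivity : 0 < ε / 3)
  have hT : HasBanachDensityZero (⋃ d ∈ Finset.Icc 1 (B + 1), {m | m ∈ S ∧ m + d ∈ S}) :=
    .biUnion _ fun d hd => h d (Finset.mem_Icc.1 hd).1
  filter_upwards [hT.eventually_lt_const (by positivity : 0 < ε / 3),
    tendsto_one_div_atTop_nhds_zero_nat.eventually_lt_const (by positivity : 0 < ε / 3),
    eventually_gt_atTop 0] with n hTn hn hn0
  have := windowDensity_le_add_shiftInter S B.succ_pos hn0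
  push_cast at this hB
  linarith

def arithProg (a d : ℕ) : Set ℕ := {m | ∃ n, m = a + n * d}

lemma image_arithProg (r d a e : ℕ) :
    (fun j => r + j * d) '' arithProg a e = arithProg (r + a * d) (e * d) := by
  ext m
  simp only [arithProg, mem_image, mem_ofPred_eq]
  constructor
  · rintro ⟨_, ⟨n, rfl⟩, rfl⟩
    exact ⟨n, by ring⟩
  · rintro ⟨n, rfl⟩
    exact ⟨a + n * e, ⟨n, rfl⟩, by ring⟩

def IsAPUnionWithNull (S : Set ℕ) : Prop :=
  ∃ (F : Finset (ℕ × ℕ)) (Z : Set ℕ), HasBanachDensityZero Z ∧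
    S = (⋃ p ∈ F, arithProg p.1 p.2) ∪ Z

lemma isAPUnionWithNull_arithProg (a d : ℕ) : IsAPUnionWithNull (arithProg a d) :=
  ⟨{(a, d)}, ∅, finite_empty.hasBanachDensityZero, by simp⟩

namespace IsAPUnionWithNull

lemma of_hasBanachDensityZero {S : Set ℕ} (h : HasBanachDensityZero S) : IsAPUnionWithNull S :=
  ⟨∅, S, h, by simp⟩

lemma union {A B : Set ℕ} (hA : IsAPUnionWithNull A) (hB : IsAPUnionWithNull B) :
    IsAPUnionWithNull (A ∪ B) := by
  classical
  obtain ⟨F, Z, hZ, rfl⟩ := hA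
  obtain ⟨F', Z', hZ', rfl⟩ := hB
  refine ⟨F ∪ F', Z ∪ Z', hZ.union hZ', ?_⟩
  rw [Finset.set_biUnion_union, union_union_union_comm]

lemma of_Ici_subset {S : Set ℕ} {N : ℕ} (h : Ici N ⊆ S) : IsAPUnionWithNull S := by
  have hS : S = (S ∩ Iio N) ∪ arithProg N 1 := by
    ext m
    simp only [mem_union, mem_inter_iff, mem_Iio, arithProg, mem_ofPred_eq, mul_one]
    refine ⟨fun hm => ?_, ?_⟩
    · by_cases hmN : m < N
      exacts [Or.inl ⟨hm, hmN⟩, Or.inr ⟨m - N, by omega⟩]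
    · rintro (⟨hm, -⟩ | ⟨n, rfl⟩)
      exacts [hm, h (Nat.le_add_right _ _)]
  rw [hS]
  exact .union (.of_hasBanachDensityZero
    ((finite_Iio N).subset inter_subset_right).hasBanachDensityZero)
    (isAPUnionWithNull_arithProg N 1)

lemma biUnion {ι : Type*} (F : Finset ι) {A : ι → Set ℕ}
    (h : ∀ i ∈ F, IsAPUnionWithNull (A i)) : IsAPUnionWithNull (⋃ i ∈ F, A i) := by
  classical
  induction F using Finset.induction_on with
  | empty => simpa using of_hasBanachDensityZero finite_empty.hasBanachDensityZero
  | insert i F _ ih =>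
    rw [Finset.set_biUnion_insert]
    exact (h i (F.mem_insert_self i)).union (ih fun j hj => h j (Finset.mem_insert_of_mem hj))

lemma image_affine {A : Set ℕ} (hA : IsAPUnionWithNull A) (r : ℕ) {d : ℕ} (hd : 0 < d) :
    IsAPUnionWithNull ((fun j => r + j * d) '' A) := by
  classical
  obtain ⟨F, Z, hZ, rfl⟩ := hA
  have hφ : StrictMono fun j => r + j * d := fun i j hij => by
    simpa using Nat.mul_lt_mul_of_pos_right hij hd
  refine ⟨F.image fun p => (r + p.1 * d, p.2 * d), _, hZ.image hφ, ?_⟩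
  rw [image_union, image_iUnion₂, Finset.set_biUnion_finset_image]
  simp only [image_arithProg]

lemma of_residues {S : Set ℕ} {d : ℕ} (hd : 0 < d)
    (h : ∀ r < d, IsAPUnionWithNull {j | r + j * d ∈ S}) : IsAPUnionWithNull S := by
  have hS : S = ⋃ r ∈ Finset.range d, (fun j => r + j * d) '' {j | r + j * d ∈ S} := by
    ext m
    simp only [mem_iUnion, mem_image, mem_ofPred_eq, Finset.mem_range]
    refine ⟨fun hm => ⟨m % d, Nat.mod_lt m hd, m / d, ?_, ?_⟩, ?_⟩
    · rwa [Nat.mod_add_div']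
    · exact Nat.mod_add_div' m d
    · rintro ⟨r, -, j, hj, rfl⟩
      exact hj
  rw [hS]
  exact .biUnion _ fun r hr => (h r (Finset.mem_range.1 hr)).image_affine r hd

end IsAPUnionWithNull

lemma exists_forall_add_mul_mem {A : Set ℕ} (hA : A.Infinite) {d : ℕ} (hd : 0 < d)
    (hdown : ∀ m, m + d ∈ A → m ∈ A) : ∃ r, ∀ j, r + j * d ∈ A := by
  have hdown' : ∀ k m, m + k * d ∈ A → m ∈ A := by
    intro k
    induction k with
    | zero => simp
    | succ k ih => exact fun m h => ih m (hdown _ (by rwa [add_mul, one_mul, ← add_assoc] at h))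
  by_contra! h
  choose J hJ using h
  refine hA ((finite_Iio ((Finset.range d).sup fun r => r + J r * d)).subset fun m hm => ?_)
  have hJm : m / d < J (m % d) := by
    by_contra! hle
    refine hJ (m % d) (hdown' (m / d - J (m % d)) _ ?_)
    rwa [add_assoc, ← add_mul, Nat.add_sub_cancel' hle, Nat.mod_add_div']
  calc m = m % d + m / d * d := (Nat.mod_add_div' m d).symm
    _ < m % d + J (m % d) * d := by gcongr
    _ ≤ _ := Finset.le_sup (f := fun r => r + J r * d) (Finset.mem_range.2 (Nat.mod_lt m hd))

section BackwardOrbit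

open TopologicalSpace

variable {X : Type*}

-- `y n` is the point `x₋ₙ` of a coherent backward orbit.
def IsBackwardOrbit (g : X → X) (y : ℕ → X) : Prop := ∀ n, g (y (n + 1)) = y n

namespace IsBackwardOrbit

variable {g : X → X} {y : ℕ → X}

lemma iterate_apply (hy : IsBackwardOrbit g y) (d m : ℕ) : g^[d] (y (m + d)) = y m := by
  induction d generalizing m with
  | zero => rfl
  | succ d ih => rw [Function.iterate_succ_apply, ← add_assoc, hy, ih]

lemma subsample (hy : IsBackwardOrbit g y) (r d : ℕ) :
    IsBackwardOrbit g^[d] fun j => y (r + j * d) := fun j => by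
  dsimp only
  rw [show r + (j + 1) * d = r + j * d + d by ring]
  exact hy.iterate_apply d _

end IsBackwardOrbit

variable [TopologicalSpace X]

def tailClosure (y : ℕ → X) (N : ℕ) : Closeds X := Closeds.closure (y '' Ici N)

def tailLimit (y : ℕ → X) : Closeds X := ⨅ N, tailClosure y N

lemma tailClosure_antitone (y : ℕ → X) : Antitone (tailClosure y) := fun _ _ h =>
  Closeds.closure_le.2 ((image_mono (Ici_subset_Ici.2 h)).trans subset_closure)

lemma tailLimit_le_of_forall_mem {y : ℕ → X} {C : Closeds X} (h : ∀ j, y j ∈ C) :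
    tailLimit y ≤ C :=
  (iInf_le _ 0).trans (Closeds.closure_le.2 (image_subset_iff.2 fun j _ => h j))

lemma tailLimit_comp_le (y : ℕ → X) {φ : ℕ → ℕ} (hφ : ∀ j, j ≤ φ j) :
    tailLimit (fun j => y (φ j)) ≤ tailLimit y := by
  refine iInf_mono fun N => Closeds.closure_le.2 ?_
  rintro _ ⟨j, hj, rfl⟩
  exact subset_closure ⟨φ j, le_trans hj (hφ j), rfl⟩

lemma tailLimit_comp_add_one (y : ℕ → X) : tailLimit (fun j => y (j + 1)) = tailLimit y := by
  have h : ∀ N, tailClosure (fun j => y (j + 1)) N = tailClosure y (N + 1) := fun N => by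
    rw [tailClosure, tailClosure, ← image_image y (· + 1), image_add_const_Ici]
  simp only [tailLimit, h, (tailClosure_antitone y).iInf_nat_add]

lemma image_tailLimit_subset {g : X → X} (hg : Continuous g) {u v : ℕ → X}
    (h : ∀ j, g (u j) = v j) : g '' tailLimit u ⊆ tailLimit v := by
  simp only [tailLimit, Closeds.coe_iInf]
  refine (image_iInter_subset _ _).trans (iInter_mono fun N => ?_)
  calc g '' closure (u '' Ici N) ⊆ closure (g '' (u '' Ici N)) :=
        image_closure_subset_closure_image hg
    _ = closure (v '' Ici N) := by rw [image_image]; simp only [h]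

lemma tailLimit_subsample_le (y : ℕ → X) (r : ℕ) {d : ℕ} (hd : 0 < d) :
    tailLimit (fun j => y (r + j * d)) ≤ tailLimit y :=
  tailLimit_comp_le y fun j => by have := Nat.le_mul_of_pos_right j hd; omega

section Noetherian

variable [NoetherianSpace X]

lemma exists_tailClosure_eq_tailLimit (y : ℕ → X) :
    ∃ N₀, ∀ N ≥ N₀, tailClosure y N = tailLimit y := by
  obtain ⟨N₀, hN₀⟩ := WellFoundedLT.antitone_chain_condition (tailClosure_antitone y)
  have hlim : tailLimit y = tailClosure y N₀ := le_antisymm (iInf_le _ _) <| le_iInf fun N =>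
    (le_total N N₀).elim (tailClosure_antitone y ·) fun h => (hN₀ N h).le
  exact ⟨N₀, fun N hN => (hN₀ N hN).symm.trans hlim.symm⟩

lemma exists_forall_ge_mem_tailLimit (y : ℕ → X) :
    ∃ N₀, ∀ j ≥ N₀, y j ∈ tailLimit y := by
  obtain ⟨N₀, hN₀⟩ := exists_tailClosure_eq_tailLimit y
  exact ⟨N₀, fun j hj => hN₀ N₀ le_rfl ▸ subset_closure ⟨j, hj, rfl⟩⟩

lemma tailLimit_subset_closure_image {g : X → X} {y : ℕ → X}
    (hy : IsBackwardOrbit g y) : (tailLimit y : Set X) ⊆ closure (g '' tailLimit y) := by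
  obtain ⟨N₀, hN₀⟩ := exists_tailClosure_eq_tailLimit y
  calc (tailLimit y : Set X) = closure (y '' Ici N₀) := by rw [← hN₀ N₀ le_rfl]; rfl
    _ ⊆ closure (g '' (y '' Ici (N₀ + 1))) := closure_mono <| by
        rintro _ ⟨j, hj, rfl⟩
        exact ⟨y (j + 1), ⟨j + 1, Nat.succ_le_succ hj, rfl⟩, hy j⟩
    _ ⊆ closure (g '' tailLimit y) := closure_mono <| image_mono <| by
        rw [← hN₀ (N₀ + 1) N₀.le_succ]
        exact subset_closure

lemma tailLimit_subsample_lt {g : X → X} {y : ℕ → X} (hg : Continuous g)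
    (hy : IsBackwardOrbit g y) {Y : Set X} (hY : IsClosed Y) (hZY : ¬(tailLimit y : Set X) ⊆ Y)
    {d r : ℕ} (hd : 0 < d) (hr : ∀ j, y (r + j * d) ∈ Y) (r' : ℕ) :
    tailLimit (fun j => y (r' + j * d)) < tailLimit y := by
  set w : ℕ → ℕ → X := fun r' j => y (r' + j * d)
  have hle : ∀ r', tailLimit (w r') ≤ tailLimit y := fun r' => tailLimit_subsample_le y r' hd
  refine (hle r').lt_of_ne ?_
  have hdown : ∀ r', tailLimit (w (r' + 1)) = tailLimit y → tailLimit (w r') = tailLimit y := by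
    intro r' h
    have hmaps : g '' tailLimit (w (r' + 1)) ⊆ tailLimit (w r') :=
      image_tailLimit_subset hg fun j => by simp only [w, add_right_comm r' 1, hy _]
    refine (hle r').antisymm ?_
    calc (tailLimit y : Set X) ⊆ closure (g '' tailLimit y) := tailLimit_subset_closure_image hy
      _ ⊆ closure (tailLimit (w r')) := closure_mono (h ▸ hmaps)
      _ = tailLimit (w r') := (tailLimit (w r')).isClosed.closure_eq
  have hper : ∀ r', tailLimit (w (r' + d)) = tailLimit (w r') := fun r' => by
    have : w (r' + d) = fun j => w r' (j + 1) := funext fun j => congrArg y (by ring)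
    rw [this, tailLimit_comp_add_one]
  intro hr'
  have hup : ∀ t, tailLimit (w (r' + t * d)) = tailLimit y := by
    intro t
    induction t with
    | zero => simpa using hr'
    | succ t ih => rw [add_mul, one_mul, ← add_assoc, hper, ih]
  have hdownk : ∀ k, tailLimit (w (r + k)) = tailLimit y → tailLimit (w r) = tailLimit y := by
    intro k
    induction k with
    | zero => exact id
    | succ k ih => exact fun h => ih (hdown _ h)
  have hrZ : tailLimit (w r) = tailLimit y := hdownk (r' + r * d - r) <| by
    rw [Nat.add_sub_cancel' (by have := Nat.le_mul_of_pos_right r hd; omega)]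
    exact hup r
  exact hZY (hrZ ▸ tailLimit_le_of_forall_mem (C := ⟨Y, hY⟩) hr)

lemma exists_mapsTo_iterate_of_not_hasBanachDensityZero {g : X → X} {y : ℕ → X}
    (hg : Continuous g) (hy : IsBackwardOrbit g y) {Y : Set X} (hY : IsClosed Y)
    (hpos : ¬HasBanachDensityZero {j | y j ∈ Y}) :
    ∃ C : Closeds X, (C : Set X) ⊆ Y ∧ ¬HasBanachDensityZero {j | y j ∈ C} ∧
      ∃ d, 0 < d ∧ MapsTo g^[d] C C := by
  obtain ⟨C, ⟨hCY, hCpos⟩, hmin⟩ := wellFounded_lt.has_min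
    {C : Closeds X | (C : Set X) ⊆ Y ∧ ¬HasBanachDensityZero {j | y j ∈ C}}
    ⟨⟨Y, hY⟩, subset_rfl, hpos⟩
  obtain ⟨d, hd, hdpos⟩ : ∃ d, 0 < d ∧
      ¬HasBanachDensityZero {m | m ∈ {j | y j ∈ C} ∧ m + d ∈ {j | y j ∈ C}} := by
    by_contra! h
    exact hCpos (.of_forall_inter_shift h)
  let C' : Closeds X := C ⊓ ⟨g^[d] ⁻¹' C, C.isClosed.preimage (hg.iterate d)⟩
  have hC'pos : ¬HasBanachDensityZero {j | y j ∈ C'} := fun hnull =>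
    hdpos <| (hnull.preimage_add d).mono fun m ⟨hm, hmd⟩ =>
      (⟨hmd, show g^[d] (y (m + d)) ∈ C by rwa [hy.iterate_apply]⟩ : y (m + d) ∈ C')
  have hC' : C' = C := by
    by_contra hne
    exact hmin C' ⟨inter_subset_left.trans hCY, hC'pos⟩ (inf_le_left.lt_of_ne hne)
  exact ⟨C, hCY, hCpos, d, hd, fun x hx => (hC'.symm ▸ hx : x ∈ C').2⟩

theorem IsBackwardOrbit.isAPUnionWithNull {g : X → X} {y : ℕ → X} (hg : Continuous g)
    (hy : IsBackwardOrbit g y) {Y : Set X} (hY : IsClosed Y) :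
    IsAPUnionWithNull {j | y j ∈ Y} := by
  induction hZ : tailLimit y using WellFoundedLT.induction generalizing g y with
  | _ Z ih =>
    subst hZ
    by_cases hZY : (tailLimit y : Set X) ⊆ Y
    · obtain ⟨N₀, hN₀⟩ := exists_forall_ge_mem_tailLimit y
      exact .of_Ici_subset fun j hj => hZY (hN₀ j hj)
    by_cases hnull : HasBanachDensityZero {j | y j ∈ Y}
    · exact .of_hasBanachDensityZero hnull
    obtain ⟨C, hCY, hCpos, d, hd, hCd⟩ :=
      exists_mapsTo_iterate_of_not_hasBanachDensityZero hg hy hY hnull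
    obtain ⟨r, hr⟩ := exists_forall_add_mul_mem (fun hfin => hCpos hfin.hasBanachDensityZero) hd
      fun m hm => (hy.iterate_apply d m ▸ hCd hm : y m ∈ C)
    exact .of_residues hd fun r' _ =>
      ih _ (tailLimit_subsample_lt hg hy hY hZY hd (fun j => hCY (hr j)) r') (hg.iterate d)
        (hy.subsample r' d) rfl

end Noetherian

end BackwardOrbit

theorem stmt_11_general {X : Type*} [TopologicalSpace X] [TopologicalSpace.NoetherianSpace X]
    (f : X → X) (hf : Continuous f) (o : ℕ → X)
    (ho : ∀ n : ℕ, f (o (n + 1)) = o n)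
    (Y : Set X) (hY : IsClosed Y) :
    ∃ (F : Finset (ℕ × ℕ)) (Z : Set ℕ), banachDensity Z = 0 ∧
      {n : ℕ | o n ∈ Y} =
        (⋃ p ∈ F, {m : ℕ | ∃ n : ℕ, m = p.1 + n * p.2}) ∪ Z := by
  obtain ⟨F, Z, hZ, hS⟩ := IsBackwardOrbit.isAPUnionWithNull hf ho hY
  exact ⟨F, Z, hZ.banachDensity_eq_zero, hS⟩

theorem stmt_11 {X : Type*} [TopologicalSpace X] [TopologicalSpace.NoetherianSpace X]
    (f : X → X) (hf : Continuous f) (x : X) (o : ℕ → X)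
    (ho0 : o 0 = x) (ho : ∀ n : ℕ, f (o (n + 1)) = o n)
    (Y : Set X) (hY : IsClosed Y) :
    ∃ (F : Finset (ℕ × ℕ)) (Z : Set ℕ), banachDensity Z = 0 ∧
      {n : ℕ | o n ∈ Y} =
        (⋃ p ∈ F, {m : ℕ | ∃ n : ℕ, m = p.1 + n * p.2}) ∪ Z :=
  stmt_11_general f hf o ho Y hY
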